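/- Let K be a field, t ≥ 1, and μ₁, ..., μ_r ∈ ℕ^t pairwise linearly independent over ℚ with {μ₁,...,μ_s} a minimal generating set of their convex cone. Let C° be the convex cone spanned by μ₂, ..., μ_r and let A be the subring of K[[z₁,...,z_t]] consisting of series whose support is contained in Γ + C° for some finite Γ ⊂ ℕ^t (i.e., A = K[[z^{μ₂},...,z^{μ_r}]][z₁,...,z_t]). If g₁(z), ..., g_m(z) ∈ K[[z]] are linearly independent over K(z) (one variable), then the multivariate power series g₁(z^{μ₁}), ..., g_m(z^{μ₁}) are linearly independent over A. -/

import Mathlib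

/-!
Write `ν = μ ⟨0, hr⟩` (the paper's `μ₁`). Pairwise independence and minimality of the
generating set keep `ν` out of the cone `C°` spanned by the other `μ i`, so by Farkas' lemma
some linear form `w` is nonpositive on `C°` and positive at `ν`. On the support of an element
of `A` the form `w` is then bounded above, so along each ray `δ + ℕ ν` such a series has only
finitely many nonzero coefficients: they form a polynomial. Every exponent lies on a ray with
`ν ≰ δ`, and along such a ray the coefficients of `h * g(z^ν)` are those of the product of the
restriction of `h` with `g`; so the relation restricts to a polynomial relation among the `g i`.
-/

open Finset

/-- The natural inclusion of `ℕ^t` into `ℝ^t`. -/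
def toR {t : ℕ} (x : Fin t → ℕ) : Fin t → ℝ := fun i => (x i : ℝ)

/-- The natural inclusion of `ℕ^t` into `ℚ^t`. -/
def toQ {t : ℕ} (x : Fin t → ℕ) : Fin t → ℚ := fun i => (x i : ℚ)

/-- The convex cone spanned by the vectors `μ i`, `i ∈ I`. -/
def coneOf {t r : ℕ} (μ : Fin r → Fin t → ℕ) (I : Set (Fin r)) : Set (Fin t → ℝ) :=
  {x | ∃ a : Fin r → ℝ, (∀ i, 0 ≤ a i) ∧ (∀ i, i ∉ I → a i = 0) ∧ x = ∑ i, a i • toR (μ i)}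

/-- Pairwise linear independence over `ℚ`. -/
def PairwiseQIndep {t r : ℕ} (μ : Fin r → Fin t → ℕ) : Prop :=
  ∀ i j, i ≠ j → ∀ a b : ℚ, a • toQ (μ i) + b • toQ (μ j) = 0 → a = 0 ∧ b = 0

/-- `{μ 0, ..., μ (s-1)}` is a minimal generating set of the cone spanned by all the `μ i`. -/
def IsMinimalBasis {t r : ℕ} (μ : Fin r → Fin t → ℕ) (s : ℕ) : Prop :=
  coneOf μ {i | (i : ℕ) < s} = coneOf μ Set.univ ∧
    ∀ I : Set (Fin r), I ⊂ {i | (i : ℕ) < s} → coneOf μ I ≠ coneOf μ Set.univ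

open Classical in
/-- The monomial substitution `g(z) ↦ g(z^μ)`: the multivariate power series
`∑ a_n z^{nμ}` associated with `g = ∑ a_n z^n`. -/
noncomputable def subMon {K : Type*} [Field K] {t : ℕ} (μ : Fin t → ℕ)
    (g : PowerSeries K) : MvPowerSeries (Fin t) K :=
  fun d => if h : ∃ n : ℕ, (d : Fin t → ℕ) = n • μ then PowerSeries.coeff h.choose g else 0

/-- Membership in the ring `A = K[[z^{μ₂},...,z^{μ_r}]][z₁,...,z_t]`: the support of the
series is contained in `Γ + C°` for some finite set `Γ ⊂ ℕ^t`, where `C°` is the convex cone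
spanned by `μ₂, ..., μ_r`. -/
def memA {K : Type*} [Field K] {t r : ℕ} (hr : 1 ≤ r) (μ : Fin r → Fin t → ℕ)
    (h : MvPowerSeries (Fin t) K) : Prop :=
  ∃ Γ : Finset (Fin t → ℕ), ∀ d : Fin t →₀ ℕ, MvPowerSeries.coeff d h ≠ 0 →
    ∃ γ ∈ Γ, ∃ c ∈ coneOf μ {i | i ≠ ⟨0, hr⟩}, toR (⇑d) = toR γ + c

open Matrix Filter

section Farkas

variable {𝕜 ι n : Type*} [Field 𝕜] [LinearOrder 𝕜] [IsStrictOrderedRing 𝕜] [Fintype ι]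
  [Fintype n]

/-- Inductive step of Farkas' lemma: if the projection of `b` along `v j` onto the hyperplane
`w ⬝ᵥ x = 0` is a nonnegative combination of the projections of the `v i`, `i ∈ s`, then `b` is a
nonnegative combination of the `v i`, `i ∈ insert j s`. -/
lemma exists_nonneg_combination_of_proj [DecidableEq ι] {v : ι → n → 𝕜} {b w : n → 𝕜}
    {s : Finset ι} {j : ι} (hwj : 0 < w ⬝ᵥ v j) (hws : ∀ i ∈ s, w ⬝ᵥ v i ≤ 0) (hwb : 0 ≤ w ⬝ᵥ b)
    {a : ι → 𝕜} (ha : 0 ≤ a) (has : ∀ i ∉ s, a i = 0)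
    (hab : b - (w ⬝ᵥ b / w ⬝ᵥ v j) • v j = ∑ i, a i • (v i - (w ⬝ᵥ v i / w ⬝ᵥ v j) • v j)) :
    ∃ a' : ι → 𝕜, 0 ≤ a' ∧ (∀ i ∉ insert j s, a' i = 0) ∧ b = ∑ i, a' i • v i := by
  set c := w ⬝ᵥ b / w ⬝ᵥ v j - ∑ i, a i * (w ⬝ᵥ v i / w ⬝ᵥ v j)
  have hc : 0 ≤ c := by
    have : ∑ i, a i * (w ⬝ᵥ v i / w ⬝ᵥ v j) ≤ 0 := sum_nonpos fun i _ => by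
      by_cases hi : i ∈ s
      · exact mul_nonpos_of_nonneg_of_nonpos (ha i)
          (div_nonpos_of_nonpos_of_nonneg (hws i hi) hwj.le)
      · simp [has i hi]
    have := div_nonneg hwb hwj.le
    linarith
  refine ⟨a + Pi.single j c, add_nonneg ha (Pi.single_nonneg.2 hc), fun i hi => ?_, ?_⟩
  · simp only [mem_insert, not_or] at hi
    simp [has i hi.2, hi.1]
  have hsingle : ∑ i, (Pi.single j c : ι → 𝕜) i • v i = c • v j :=
    (sum_eq_single j (fun i _ hi => by simp [hi]) (by simp)).trans (by simp)
  calc b = ∑ i, a i • v i + c • v j := by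
        simp only [smul_sub, sum_sub_distrib, smul_smul, ← sum_smul] at hab
        linear_combination (norm := module) hab
    _ = _ := by simp only [Pi.add_apply, add_smul, sum_add_distrib, hsingle]

theorem exists_separating_dotProduct [DecidableEq ι] (s : Finset ι) (v : ι → n → 𝕜)
    (b : n → 𝕜) (hb : ¬ ∃ a : ι → 𝕜, 0 ≤ a ∧ (∀ i ∉ s, a i = 0) ∧ b = ∑ i, a i • v i) :
    ∃ w : n → 𝕜, (∀ i ∈ s, w ⬝ᵥ v i ≤ 0) ∧ 0 < w ⬝ᵥ b := by
  induction s using Finset.induction_on generalizing v b with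
  | empty =>
    have hb0 : b ≠ 0 := fun h => hb ⟨0, le_rfl, fun _ _ => rfl, by simp [h]⟩
    exact ⟨b, by simp, (sum_nonneg fun i _ => mul_self_nonneg (b i)).lt_of_ne'
      (dotProduct_self_eq_zero.not.2 hb0)⟩
  | insert j s hj ih =>
    obtain ⟨w, hws, hwb⟩ := ih v b fun ⟨a, ha, has, hab⟩ =>
      hb ⟨a, ha, fun i hi => has i fun his => hi (mem_insert_of_mem his), hab⟩
    by_cases hwj : w ⬝ᵥ v j ≤ 0
    · exact ⟨w, forall_mem_insert _ _ _ |>.2 ⟨hwj, hws⟩, hwb⟩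
    replace hwj := not_le.1 hwj
    set proj : (n → 𝕜) → n → 𝕜 := fun x => x - (w ⬝ᵥ x / w ⬝ᵥ v j) • v j with hproj
    obtain ⟨w', hw's, hw'b⟩ := ih (proj ∘ v) (proj b) fun ⟨a, ha, has, hab⟩ =>
      hb (exists_nonneg_combination_of_proj hwj hws hwb.le ha has hab)
    have hdot (x : n → 𝕜) : (w' - (w' ⬝ᵥ v j / w ⬝ᵥ v j) • w) ⬝ᵥ x = w' ⬝ᵥ proj x := by
      simp only [hproj, sub_dotProduct, smul_dotProduct, dotProduct_sub, dotProduct_smul,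
        smul_eq_mul]
      ring
    refine ⟨w' - (w' ⬝ᵥ v j / w ⬝ᵥ v j) • w, fun i hi => ?_, (hdot b).symm ▸ hw'b⟩
    rw [hdot]
    rcases mem_insert.1 hi with rfl | hi
    · simp [hproj, hwj.ne']
    · exact hw's i hi

end Farkas

section toR

variable {t : ℕ}

lemma toR_nonneg (x : Fin t → ℕ) : 0 ≤ toR x := fun _ => Nat.cast_nonneg _

@[simp]
lemma toR_zero : toR (0 : Fin t → ℕ) = 0 :=
  funext fun _ => Nat.cast_zero

@[simp]
lemma toR_add (x y : Fin t → ℕ) : toR (x + y) = toR x + toR y :=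
  funext fun _ => Nat.cast_add _ _

@[simp]
lemma toR_nsmul (k : ℕ) (x : Fin t → ℕ) : toR (k • x) = (k : ℝ) • toR x :=
  funext fun _ => by simp [toR]

end toR

section coneOf

variable {t r : ℕ} {μ : Fin r → Fin t → ℕ} {I J : Set (Fin r)}

lemma coneOf_nonneg {x : Fin t → ℝ} (hx : x ∈ coneOf μ I) : 0 ≤ x := by
  obtain ⟨a, ha, -, rfl⟩ := hx
  exact sum_nonneg fun i _ => smul_nonneg (ha i) (toR_nonneg _)

lemma zero_mem_coneOf : (0 : Fin t → ℝ) ∈ coneOf μ I :=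
  ⟨0, fun _ => le_rfl, fun _ _ => rfl, by simp⟩

lemma coneOf_smul_mem {c : ℝ} (hc : 0 ≤ c) {x : Fin t → ℝ} (hx : x ∈ coneOf μ I) :
    c • x ∈ coneOf μ I := by
  obtain ⟨a, ha, haI, rfl⟩ := hx
  exact ⟨c • a, fun i => mul_nonneg hc (ha i), fun i hi => by simp [haI i hi],
    by simp [smul_sum, smul_smul]⟩

lemma coneOf_sum_mem {ι : Type*} (s : Finset ι) {x : ι → Fin t → ℝ}
    (hx : ∀ j ∈ s, x j ∈ coneOf μ I) : ∑ j ∈ s, x j ∈ coneOf μ I := by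
  classical
  induction s using Finset.induction_on with
  | empty => simpa using zero_mem_coneOf
  | insert j s hj ih =>
    rw [sum_insert hj]
    obtain ⟨a, ha, haI, hxa⟩ := hx j (mem_insert_self j s)
    obtain ⟨b, hb, hbI, hxb⟩ := ih fun k hk => hx k (mem_insert_of_mem hk)
    exact ⟨a + b, fun i => add_nonneg (ha i) (hb i), fun i hi => by simp [haI i hi, hbI i hi],
      by simp [hxa, hxb, add_smul, sum_add_distrib]⟩

lemma toR_mem_coneOf {i : Fin r} (hi : i ∈ I) : toR (μ i) ∈ coneOf μ I := by
  classical
  refine ⟨Pi.single i 1, (Pi.single_nonneg.2 zero_le_one : (0 : Fin r → ℝ) ≤ Pi.single i 1),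
    fun j hj => ?_, ?_⟩
  · exact Pi.single_eq_of_ne (ne_of_mem_of_not_mem hi hj).symm _
  · rw [sum_eq_single i (fun j _ hj => by simp [hj]) (by simp)]
    simp

lemma coneOf_mono (hIJ : I ⊆ J) : coneOf μ I ⊆ coneOf μ J :=
  fun _ ⟨a, ha, haI, hx⟩ => ⟨a, ha, fun i hi => haI i fun h => hi (hIJ h), hx⟩

lemma coneOf_subset_of_toR_mem (h : ∀ i ∈ J, toR (μ i) ∈ coneOf μ I) :
    coneOf μ J ⊆ coneOf μ I := by
  rintro _ ⟨a, ha, haJ, rfl⟩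
  refine coneOf_sum_mem _ fun i _ => ?_
  by_cases hi : i ∈ J
  · exact coneOf_smul_mem (ha i) (h i hi)
  · simpa [haJ i hi] using zero_mem_coneOf

lemma exists_eq_smul_add_of_mem_coneOf {x : Fin t → ℝ} (hx : x ∈ coneOf μ J) (i₀ : Fin r) :
    ∃ c : ℝ, 0 ≤ c ∧ ∃ u ∈ coneOf μ (J \ {i₀}), x = c • toR (μ i₀) + u := by
  obtain ⟨a, ha, haJ, rfl⟩ := hx
  refine ⟨a i₀, ha i₀, _, coneOf_sum_mem (univ.erase i₀) fun i hi => ?_,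
    (add_sum_erase _ _ (mem_univ i₀)).symm⟩
  by_cases hiJ : i ∈ J
  · exact coneOf_smul_mem (ha i) (toR_mem_coneOf ⟨hiJ, ne_of_mem_erase hi⟩)
  · simpa [haJ i hiJ] using zero_mem_coneOf

end coneOf

section Generators

variable {t r : ℕ} {μ : Fin r → Fin t → ℕ}

lemma PairwiseQIndep.toR_ne_smul (hμ : PairwiseQIndep μ) {i j : Fin r} (hij : i ≠ j) (c : ℝ) :
    toR (μ i) ≠ c • toR (μ j) := by
  intro hc
  have hcoord (k : Fin t) : (μ i k : ℝ) = c * μ j k := congrFun hc k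
  by_cases hj : μ j = 0
  · have hi : μ i = 0 := funext fun k => by simpa [hj] using hcoord k
    exact one_ne_zero (hμ i j hij 1 1 (funext fun k => by simp [hi, hj, toQ])).1
  obtain ⟨k₀, hk₀⟩ : ∃ k, μ j k ≠ 0 := Function.ne_iff.1 hj
  -- `c` is the rational number `μ i k₀ / μ j k₀`.
  have hcross (k : Fin t) : μ i k * μ j k₀ = μ i k₀ * μ j k := by
    have : (μ i k : ℝ) * μ j k₀ = μ i k₀ * μ j k := by rw [hcoord, hcoord]; ring
    exact_mod_cast this
  refine one_ne_zero (hμ i j hij 1 (-(μ i k₀ / μ j k₀ : ℚ)) (funext fun k => ?_)).1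
  have hk₀' : (μ j k₀ : ℚ) ≠ 0 := Nat.cast_ne_zero.2 hk₀
  have : (μ i k : ℚ) * μ j k₀ = μ i k₀ * μ j k := by exact_mod_cast hcross k
  simp only [toQ, Pi.add_apply, Pi.smul_apply, smul_eq_mul, Pi.zero_apply]
  field_simp
  linarith

lemma IsMinimalBasis.toR_notMem_coneOf_diff {s : ℕ} (hμ : IsMinimalBasis μ s) {i₀ : Fin r}
    (hi₀ : (i₀ : ℕ) < s) : toR (μ i₀) ∉ coneOf μ ({i | (i : ℕ) < s} \ {i₀}) := by
  intro h
  refine hμ.2 _ (Set.sdiff_singleton_ssubset.2 hi₀) (subset_antisymm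
    (coneOf_mono (Set.subset_univ _)) ?_)
  rw [← hμ.1]
  refine coneOf_subset_of_toR_mem fun i hi => ?_
  rcases eq_or_ne i i₀ with rfl | hne
  · exact h
  · exact toR_mem_coneOf ⟨hi, hne⟩


theorem toR_notMem_coneOf_ne {s : ℕ} (hindep : PairwiseQIndep μ)
    (hbasis : IsMinimalBasis μ s) {i₀ : Fin r} (hi₀ : (i₀ : ℕ) < s) :
    toR (μ i₀) ∉ coneOf μ {i | i ≠ i₀} := by
  rintro ⟨b, hb, hbi₀, hsum⟩
  set I : Set (Fin r) := {i | (i : ℕ) < s} \ {i₀}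
  have hrep (j : Fin r) : ∃ c : ℝ, 0 ≤ c ∧ ∃ u ∈ coneOf μ I, toR (μ j) = c • toR (μ i₀) + u :=
    exists_eq_smul_add_of_mem_coneOf (hbasis.1 ▸ toR_mem_coneOf (Set.mem_univ j)) i₀
  choose c hc u hu hcu using hrep
  set T := ∑ j, b j * c j
  set U := ∑ j, b j • u j
  have hU : U ∈ coneOf μ I := coneOf_sum_mem _ fun j _ => coneOf_smul_mem (hb j) (hu j)
  have hdecomp : toR (μ i₀) = T • toR (μ i₀) + U := calc
    toR (μ i₀) = ∑ j, b j • (c j • toR (μ i₀) + u j) := hsum.trans (sum_congr rfl fun j _ => by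
      rw [← hcu j])
    _ = T • toR (μ i₀) + U := by simp only [T, U, smul_add, sum_add_distrib, smul_smul, sum_smul]
  rcases lt_or_ge T 1 with hT | hT
  · -- Then `μ i₀ = (1 - T)⁻¹ • U` lies in the cone of the other basis vectors.
    refine hbasis.toR_notMem_coneOf_diff hi₀ ?_
    have : toR (μ i₀) = (1 - T)⁻¹ • U := by
      rw [eq_inv_smul_iff₀ (sub_ne_zero.2 hT.ne')]
      linear_combination (norm := module) hdecomp
    exact this ▸ coneOf_smul_mem (inv_nonneg.2 (sub_nonneg.2 hT.le)) hU
  · -- Then `(T - 1) • μ i₀ + U = 0` is a sum of nonnegative vectors, so every `b j • u j`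
    -- vanishes, and any `j` with `b j * c j > 0` has `μ j = c j • μ i₀`.
    have hU0 : U = 0 := ((add_eq_zero_iff_of_nonneg
      (smul_nonneg (sub_nonneg.2 hT) (toR_nonneg _)) (coneOf_nonneg hU)).1
      (by linear_combination (norm := module) -hdecomp)).2
    have hbu (j : Fin r) : b j • u j = 0 := (sum_eq_zero_iff_of_nonneg
      (fun j _ => smul_nonneg (hb j) (coneOf_nonneg (hu j)))).1 hU0 j (mem_univ j)
    obtain ⟨j, -, hj⟩ := exists_lt_of_sum_lt (by simpa using zero_lt_one.trans_le hT :
      ∑ j : Fin r, (0 : ℝ) < ∑ j, b j * c j)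
    have hbj : 0 < b j := pos_of_mul_pos_left hj (hc j)
    have hji₀ : j ≠ i₀ := fun h => hbj.ne' (hbi₀ j (by simpa using h))
    refine hindep.toR_ne_smul hji₀ (c j) ?_
    rw [hcu j, (smul_eq_zero.1 (hbu j)).resolve_left hbj.ne', add_zero]

lemma exists_separating_dotProduct_coneOf {I : Set (Fin r)} {x : Fin t → ℝ} (hx : x ∉ coneOf μ I) :
    ∃ w : Fin t → ℝ, (∀ c ∈ coneOf μ I, w ⬝ᵥ c ≤ 0) ∧ 0 < w ⬝ᵥ x := by
  classical
  obtain ⟨w, hw, hwx⟩ := exists_separating_dotProduct (univ.filter (· ∈ I))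
    (fun i => toR (μ i)) x fun ⟨a, ha, haI, hxa⟩ =>
      hx ⟨a, ha, fun i hi => haI i (by simpa using hi), hxa⟩
  refine ⟨w, ?_, hwx⟩
  rintro _ ⟨a, ha, haI, rfl⟩
  rw [dotProduct_sum]
  refine sum_nonpos fun i _ => ?_
  rw [dotProduct_smul, smul_eq_mul]
  by_cases hi : i ∈ I
  · exact mul_nonpos_of_nonneg_of_nonpos (ha i) (hw i (by simpa using hi))
  · simp [haI i hi]

end Generators

section NsmulDecomposition

variable {M : Type*} [AddCommMonoid M] [PartialOrder M] [IsOrderedCancelAddMonoid M]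
  [CanonicallyOrderedAdd M] {ν δ : M}

lemma le_of_nsmul_le_add_nsmul (hδ : ¬ ν ≤ δ) {l n : ℕ} (h : l • ν ≤ δ + n • ν) : l ≤ n := by
  by_contra! hnl
  refine hδ (le_of_add_le_add_left (a := n • ν) ?_)
  calc n • ν + ν = (n + 1) • ν := (succ_nsmul ν n).symm
    _ ≤ l • ν := nsmul_le_nsmul_left zero_le hnl
    _ ≤ n • ν + δ := add_comm δ (n • ν) ▸ h

lemma exists_eq_add_nsmul_of_not_le [Sub M] [OrderedSub M] [WellFoundedLT M] (hν : ν ≠ 0)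
    (d : M) : ∃ δ, ¬ ν ≤ δ ∧ ∃ n : ℕ, d = δ + n • ν := by
  induction d using WellFoundedLT.induction with
  | ind d ih =>
    by_cases hνd : ν ≤ d
    · have hlt : d - ν < d := tsub_le_self.lt_of_ne fun h =>
        hν (add_eq_left.1 (h ▸ tsub_add_cancel_of_le hνd))
      obtain ⟨δ, hδ, n, hn⟩ := ih (d - ν) hlt
      exact ⟨δ, hδ, n + 1, by rw [succ_nsmul, ← add_assoc, ← hn, tsub_add_cancel_of_le hνd]⟩
    · exact ⟨d, hνd, 0, by simp⟩

end NsmulDecomposition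

section RaySlice

variable {σ R : Type*} [CommSemiring R]

noncomputable def raySlice (ν δ : σ →₀ ℕ) : MvPowerSeries σ R →ₗ[R] PowerSeries R where
  toFun f := PowerSeries.mk fun k => MvPowerSeries.coeff (δ + k • ν) f
  map_add' f g := by ext; simp
  map_smul' c f := by ext; simp

@[simp]
lemma coeff_raySlice (ν δ : σ →₀ ℕ) (f : MvPowerSeries σ R) (k : ℕ) :
    PowerSeries.coeff k (raySlice ν δ f) = MvPowerSeries.coeff (δ + k • ν) f := by
  simp [raySlice]

end RaySlice

section SubMon

variable {K : Type*} [Field K] {t : ℕ} {ν : Fin t →₀ ℕ}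

lemma coeff_subMon_nsmul (hν : ν ≠ 0) (g : PowerSeries K) (n : ℕ) :
    MvPowerSeries.coeff (n • ν) (subMon ⇑ν g) = PowerSeries.coeff n g := by
  have hex : ∃ k : ℕ, ⇑(n • ν) = k • ⇑ν := ⟨n, Finsupp.coe_smul n ν⟩
  have hchoose : hex.choose = n := (nsmul_left_strictMono (pos_iff_ne_zero.2 hν)).injective
    (DFunLike.coe_injective (by simpa using hex.choose_spec.symm))
  rw [MvPowerSeries.coeff_apply]
  simp only [subMon, dif_pos hex, hchoose]

lemma coeff_subMon_of_forall_ne {d : Fin t →₀ ℕ} (hd : ∀ n : ℕ, d ≠ n • ν) (g : PowerSeries K) :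
    MvPowerSeries.coeff d (subMon ⇑ν g) = 0 := by
  rw [MvPowerSeries.coeff_apply]
  refine dif_neg fun ⟨n, hn⟩ => hd n (DFunLike.coe_injective ?_)
  simpa using hn

theorem raySlice_mul_subMon (hν : ν ≠ 0) {δ : Fin t →₀ ℕ} (hδ : ¬ ν ≤ δ)
    (f : MvPowerSeries (Fin t) K) (g : PowerSeries K) :
    raySlice ν δ (f * subMon ⇑ν g) = raySlice ν δ f * g := by
  ext n
  rw [coeff_raySlice, MvPowerSeries.coeff_mul, PowerSeries.coeff_mul]
  symm
  refine sum_of_injOn (fun q => (δ + q.1 • ν, q.2 • ν)) ?_ ?_ ?_ ?_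
  · rintro ⟨a, b⟩ hab ⟨a', b'⟩ hab' heq
    have hb : b = b' := (nsmul_left_strictMono (pos_iff_ne_zero.2 hν)).injective
      (Prod.ext_iff.1 heq).2
    rw [mem_coe, HasAntidiagonal.mem_antidiagonal] at hab hab'
    exact Prod.ext (by simp only at hab hab' hb; omega) hb
  · rintro ⟨a, b⟩ hab
    rw [mem_coe, HasAntidiagonal.mem_antidiagonal] at hab ⊢
    rw [add_assoc, ← add_nsmul, hab]
  · -- An exponent `l • ν` of `g(z^ν)` pairs with `δ + (n - l) • ν`, and `l ≤ n` as `ν ≰ δ`.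
    rintro ⟨p₁, p₂⟩ hp hpe
    rw [HasAntidiagonal.mem_antidiagonal] at hp
    by_cases hp₂ : ∃ l : ℕ, p₂ = l • ν
    · obtain ⟨l, rfl⟩ := hp₂
      have hl : l ≤ n := le_of_nsmul_le_add_nsmul hδ (hp ▸ le_add_self)
      have hp₁ : p₁ = δ + (n - l) • ν := add_right_cancel (b := l • ν) <| by
        rw [hp, add_assoc, ← add_nsmul, Nat.sub_add_cancel hl]
      exact absurd ⟨(n - l, l), HasAntidiagonal.mem_antidiagonal.2 (Nat.sub_add_cancel hl),
        by simp [hp₁]⟩ hpe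
    · push Not at hp₂
      simp [coeff_subMon_of_forall_ne hp₂]
  · rintro ⟨a, b⟩ -
    simp [coeff_subMon_nsmul hν]

end SubMon

lemma PowerSeries.exists_coe_eq_of_eventually_coeff_eq_zero {R : Type*} [CommSemiring R]
    {f : PowerSeries R} (hf : ∀ᶠ k in atTop, PowerSeries.coeff k f = 0) :
    ∃ p : Polynomial R, (p : PowerSeries R) = f := by
  obtain ⟨N, hN⟩ := eventually_atTop.1 hf
  refine ⟨PowerSeries.trunc N f, PowerSeries.ext fun k => ?_⟩
  rw [Polynomial.coeff_coe, PowerSeries.coeff_trunc]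
  split_ifs with hk
  · rfl
  · exact (hN k (not_lt.1 hk)).symm

section Support

variable {t : ℕ}

lemma memA.exists_dotProduct_le {K : Type*} [Field K] {r : ℕ} {hr : 1 ≤ r}
    {μ : Fin r → Fin t → ℕ} {f : MvPowerSeries (Fin t) K} (hf : memA hr μ f) {w : Fin t → ℝ}
    (hw : ∀ c ∈ coneOf μ {i | i ≠ ⟨0, hr⟩}, w ⬝ᵥ c ≤ 0) :
    ∃ B, ∀ d, MvPowerSeries.coeff d f ≠ 0 → w ⬝ᵥ toR ⇑d ≤ B := by
  obtain ⟨Γ, hΓ⟩ := hf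
  obtain ⟨B, hB⟩ := (Γ.image fun γ => w ⬝ᵥ toR γ).bddAbove
  refine ⟨B, fun d hd => ?_⟩
  obtain ⟨γ, hγ, c, hc, hdγ⟩ := hΓ d hd
  calc w ⬝ᵥ toR ⇑d = w ⬝ᵥ toR γ + w ⬝ᵥ c := by rw [hdγ, dotProduct_add]
    _ ≤ w ⬝ᵥ toR γ := add_le_of_nonpos_right (hw c hc)
    _ ≤ B := hB (by simpa using mem_image_of_mem _ hγ)

lemma eventually_coeff_add_nsmul_eq_zero {R : Type*} [Semiring R] {f : MvPowerSeries (Fin t) R}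
    {w : Fin t → ℝ} {B : ℝ} (hB : ∀ d, MvPowerSeries.coeff d f ≠ 0 → w ⬝ᵥ toR ⇑d ≤ B)
    {ν : Fin t →₀ ℕ} (hν : 0 < w ⬝ᵥ toR ⇑ν) (δ : Fin t →₀ ℕ) :
    ∀ᶠ k : ℕ in atTop, MvPowerSeries.coeff (δ + k • ν) f = 0 := by
  have hlin (k : ℕ) : w ⬝ᵥ toR ⇑(δ + k • ν) = w ⬝ᵥ toR ⇑δ + k * w ⬝ᵥ toR ⇑ν := by
    rw [Finsupp.coe_add, Finsupp.coe_smul, toR_add, toR_nsmul, dotProduct_add, dotProduct_smul,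
      smul_eq_mul]
  have hto : Tendsto (fun k : ℕ => w ⬝ᵥ toR ⇑δ + k * w ⬝ᵥ toR ⇑ν) atTop atTop :=
    tendsto_atTop_add_const_left _ _ (tendsto_natCast_atTop_atTop.atTop_mul_const hν)
  filter_upwards [hto.eventually_gt_atTop B] with k hk
  by_contra hne
  exact (hB _ hne).not_gt (hlin k ▸ hk)

end Support

theorem stmt8_general {K : Type*} [Field K] {t r : ℕ} (hr : 1 ≤ r)
    (μ : Fin r → Fin t → ℕ) (hindep : PairwiseQIndep μ)
    (s : ℕ) (hs1 : 1 ≤ s) (hbasis : IsMinimalBasis μ s)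
    (m : ℕ) (g : Fin m → PowerSeries K)
    (hg : ∀ p : Fin m → Polynomial K, (∑ i, (p i : PowerSeries K) * g i) = 0 → ∀ i, p i = 0)
    (h : Fin m → MvPowerSeries (Fin t) K) (hA : ∀ i, memA hr μ (h i))
    (hrel : (∑ i, h i * subMon (μ ⟨0, hr⟩) (g i)) = 0) :
    ∀ i, h i = 0 := by
  obtain ⟨w, hwC, hwν⟩ := exists_separating_dotProduct_coneOf
    (toR_notMem_coneOf_ne hindep hbasis (i₀ := ⟨0, hr⟩) hs1)
  set ν : Fin t →₀ ℕ := Finsupp.equivFunOnFinite.symm (μ ⟨0, hr⟩)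
  have hν : ν ≠ 0 := by
    intro hν
    have hμ₀ : μ ⟨0, hr⟩ = 0 := congrArg DFunLike.coe hν
    simp [hμ₀] at hwν
  have hpoly (δ : Fin t →₀ ℕ) (j : Fin m) :
      ∃ p : Polynomial K, (p : PowerSeries K) = raySlice ν δ (h j) := by
    obtain ⟨B, hB⟩ := (hA j).exists_dotProduct_le hwC
    exact PowerSeries.exists_coe_eq_of_eventually_coeff_eq_zero
      (by simpa using eventually_coeff_add_nsmul_eq_zero hB hwν δ)
  intro i
  ext d
  obtain ⟨δ, hδ, n, rfl⟩ := exists_eq_add_nsmul_of_not_le hν d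
  choose p hp using hpoly δ
  have hsum : ∑ j, (p j : PowerSeries K) * g j = 0 := by
    simp only [hp, ← raySlice_mul_subMon hν hδ, ← map_sum]
    exact (congrArg (raySlice ν δ) hrel).trans (map_zero _)
  rw [← coeff_raySlice, ← hp i, hg p hsum i]
  simp

theorem stmt8 {K : Type*} [Field K] {t r : ℕ} (ht : 1 ≤ t) (hr : 1 ≤ r)
    (μ : Fin r → Fin t → ℕ) (hindep : PairwiseQIndep μ)
    (s : ℕ) (hs1 : 1 ≤ s) (hsr : s ≤ r) (hbasis : IsMinimalBasis μ s)
    (m : ℕ) (g : Fin m → PowerSeries K)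
    (hg : ∀ p : Fin m → Polynomial K, (∑ i, (p i : PowerSeries K) * g i) = 0 → ∀ i, p i = 0)
    (h : Fin m → MvPowerSeries (Fin t) K) (hA : ∀ i, memA hr μ (h i))
    (hrel : (∑ i, h i * subMon (μ ⟨0, hr⟩) (g i)) = 0) :
    ∀ i, h i = 0 :=
  stmt8_general hr μ hindep s hs1 hbasis m g hg h hA hrel
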